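/- arXiv:0708.2130 — 6 statements merged into one kernel-verified Lean document; each statement's English description precedes it below -/
import Mathlib

section
/- Let F_q be a finite field with q elements and A, B, C, D ⊆ F_q. If T(A,B,C,D) denotes the number of quadruples (a,b,c,d) ∈ A×B×C×D with a + b = cd, then |T(A,B,C,D) - |A||B||C||D|/(q-1)| ≤ 2(q·|A||B||C||D|)^{1/2}. -/
/-!
Write `X̂ t = ∑ x ∈ X, ψ (t * x)` for a primitive additive character `ψ` of `F`. Orthogonality of
characters gives `q T = ∑ t, Â t * B̂ t * ∑ c ∈ C, D̂ (-t * c)`, whose `t = 0` term is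
`N = |A||B||C||D|`. For `t ≠ 0`, Cauchy–Schwarz and Parseval (`∑ t, ‖X̂ t‖² = q |X|`, and
`c ↦ -t * c` is a bijection) bound the inner sum by `√(q |C||D|)`, while Cauchy–Schwarz and Parseval
with the `t = 0` term removed give `∑_{t ≠ 0} ‖Â t‖ ‖B̂ t‖ ≤ s (q - s)` with `s = √(|A||B|)`.
Hence `|q T - N| ≤ √(q N) (q - s)`, and the saving `s` absorbs the change of main term from `N / q`
to `N / (q - 1)`.
-/

open Finset

lemma sqrt_mul_sub_sq_mul_sqrt_mul_sub_sq_le {q a b : ℝ} (ha : 0 ≤ a) (hb : 0 ≤ b)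
    (haq : a ≤ q) (hbq : b ≤ q) :
    √(q * a - a ^ 2) * √(q * b - b ^ 2) ≤ √(a * b) * (q - √(a * b)) := by
  set s := √(a * b)
  have hs : s ^ 2 = a * b := Real.sq_sqrt (mul_nonneg ha hb)
  have hsq : s ≤ q := Real.sqrt_le_iff.2 ⟨ha.trans haq, by nlinarith⟩
  have hamgm : 2 * s ≤ a + b := by nlinarith [sq_nonneg (a - b), Real.sqrt_nonneg (a * b)]
  have hgap : (s * (q - s)) ^ 2 - (q * a - a ^ 2) * (q * b - b ^ 2) =
      a * b * q * (a + b - 2 * s) := by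
    linear_combination (q ^ 2 - 2 * q * s + s ^ 2 + a * b) * hs
  rw [← Real.sqrt_mul' _ (by nlinarith),
    Real.sqrt_le_left (by nlinarith [Real.sqrt_nonneg (a * b)])]
  nlinarith [mul_nonneg (mul_nonneg (mul_nonneg ha hb) (ha.trans haq)) (sub_nonneg.2 hamgm)]

lemma abs_sub_div_sub_one_le {q T r s : ℝ} (hq : 2 ≤ q) (hr : 0 ≤ r) (hrq : r ≤ q)
    (hs : 0 ≤ s) (hsq : s ≤ q) (hT : |q * T - r ^ 2 * s ^ 2| ≤ √q * r * (s * (q - s))) :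
    |T - r ^ 2 * s ^ 2 / (q - 1)| ≤ 2 * (√q * r * s) := by
  have hq0 : 0 < q - 1 := by linarith
  have hsqrt : 1 ≤ √q := Real.one_le_sqrt.2 (by linarith)
  have hmain : |T - r ^ 2 * s ^ 2 / q| ≤ √q * r * (s * (q - s)) / q := by
    rw [show T - r ^ 2 * s ^ 2 / q = (q * T - r ^ 2 * s ^ 2) / q by field_simp, abs_div,
      abs_of_pos (by linarith : 0 < q)]
    gcongr
  have hshift : r ^ 2 * s ^ 2 / (q - 1) ≤ √q * r * (s * (q + s)) := by
    rw [div_le_iff₀ hq0]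
    calc r ^ 2 * s ^ 2 = r * s * (r * s) := by ring
      _ ≤ r * s * (2 * (q - 1) * s) := by gcongr; linarith
      _ = r * s * (q - 1) * (2 * s) := by ring
      _ ≤ r * s * (q - 1) * (q + s) := by gcongr; linarith
      _ ≤ r * s * (q - 1) * (√q * (q + s)) := by
        gcongr; exact le_mul_of_one_le_left (by positivity) hsqrt
      _ = √q * r * (s * (q + s)) * (q - 1) := by ring
  calc |T - r ^ 2 * s ^ 2 / (q - 1)|
      ≤ |T - r ^ 2 * s ^ 2 / q| + |r ^ 2 * s ^ 2 / q - r ^ 2 * s ^ 2 / (q - 1)| :=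
        abs_sub_le _ _ _
    _ = |T - r ^ 2 * s ^ 2 / q| + r ^ 2 * s ^ 2 / (q - 1) / q := by
        congr 1
        rw [abs_sub_comm, abs_of_nonneg]
        · field_simp; ring
        · rw [sub_nonneg]; gcongr; linarith
    _ ≤ √q * r * (s * (q - s)) / q + √q * r * (s * (q + s)) / q := by gcongr
    _ = 2 * (√q * r * s) := by field_simp; ring

section CommRing

variable {R : Type*} [CommRing R]

noncomputable def expSum (ψ : AddChar R ℂ) (X : Finset R) (t : R) : ℂ := ∑ x ∈ X, ψ (t * x)

lemma expSum_zero (ψ : AddChar R ℂ) (X : Finset R) : expSum ψ X 0 = #X := by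
  simp [expSum]

def addEqMulCount [DecidableEq R] (A B C D : Finset R) : ℕ :=
  #{x ∈ A ×ˢ B ×ˢ C ×ˢ D | x.1 + x.2.1 = x.2.2.1 * x.2.2.2}

variable [Fintype R] [DecidableEq R] {ψ : AddChar R ℂ}

lemma sum_norm_expSum_sq (hψ : ψ.IsPrimitive) (X : Finset R) :
    ∑ t, ‖expSum ψ X t‖ ^ 2 = Fintype.card R * #X := by
  have hpair (t : R) : ((‖expSum ψ X t‖ ^ 2 : ℝ) : ℂ) = ∑ x ∈ X, ∑ y ∈ X, ψ (t * (x - y)) := by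
    rw [Complex.ofReal_pow, ← Complex.mul_conj', expSum, map_sum, sum_mul_sum]
    simp only [← AddChar.map_neg_eq_conj, ← AddChar.map_add_eq_mul, sub_eq_add_neg, mul_add,
      mul_neg]
  apply Complex.ofReal_injective
  simp only [Complex.ofReal_sum, hpair]
  rw [sum_comm]
  simp only [sum_comm (s := univ) (t := X), AddChar.sum_mulShift _ hψ, sub_eq_zero]
  simp [mul_comm]

lemma norm_sum_expSum_mul_sq_le (hψ : ψ.IsPrimitive) (C D : Finset R) {u : R} (hu : IsUnit u) :
    ‖∑ c ∈ C, expSum ψ D (u * c)‖ ^ 2 ≤ Fintype.card R * #C * #D := by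
  calc ‖∑ c ∈ C, expSum ψ D (u * c)‖ ^ 2
      ≤ (∑ c ∈ C, ‖expSum ψ D (u * c)‖) ^ 2 := by gcongr; exact norm_sum_le _ _
    _ ≤ #C * ∑ c ∈ C, ‖expSum ψ D (u * c)‖ ^ 2 := sq_sum_le_card_mul_sum_sq
    _ ≤ #C * ∑ c, ‖expSum ψ D (u * c)‖ ^ 2 := by
        gcongr ?_ * ?_
        exact sum_le_univ_sum_of_nonneg fun _ ↦ by positivity
    _ = #C * (Fintype.card R * #D) := by
        rw [(IsUnit.isUnit_iff_mulLeft_bijective.1 hu).sum_comp (‖expSum ψ D ·‖ ^ 2),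
          sum_norm_expSum_sq hψ]
    _ = Fintype.card R * #C * #D := by ring

lemma sum_erase_zero_norm_expSum_sq (hψ : ψ.IsPrimitive) (X : Finset R) :
    ∑ t ∈ univ.erase 0, ‖expSum ψ X t‖ ^ 2 = Fintype.card R * #X - #X ^ 2 := by
  rw [← sum_norm_expSum_sq hψ X, ← add_sum_erase _ _ (mem_univ 0), expSum_zero]
  simp

lemma sum_erase_zero_norm_mul_norm_le (hψ : ψ.IsPrimitive) (A B : Finset R) :
    ∑ t ∈ univ.erase 0, ‖expSum ψ A t‖ * ‖expSum ψ B t‖ ≤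
      √(#A * #B) * (Fintype.card R - √(#A * #B)) :=
  calc _ ≤ √(∑ t ∈ univ.erase 0, ‖expSum ψ A t‖ ^ 2) *
          √(∑ t ∈ univ.erase 0, ‖expSum ψ B t‖ ^ 2) :=
        Real.sum_mul_le_sqrt_mul_sqrt _ _ _
    _ ≤ _ := by
        rw [sum_erase_zero_norm_expSum_sq hψ, sum_erase_zero_norm_expSum_sq hψ]
        exact sqrt_mul_sub_sq_mul_sqrt_mul_sub_sq_le (by positivity) (by positivity)
          (mod_cast card_le_univ A) (mod_cast card_le_univ B)

lemma card_mul_addEqMulCount_eq_sum (hψ : ψ.IsPrimitive) (A B C D : Finset R) :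
    (Fintype.card R : ℂ) * addEqMulCount A B C D =
      ∑ t, expSum ψ A t * expSum ψ B t * ∑ c ∈ C, expSum ψ D (-t * c) := by
  have hdetect (x : R × R × R × R) :
      (Fintype.card R : ℂ) * (if x.1 + x.2.1 = x.2.2.1 * x.2.2.2 then 1 else 0) =
        ∑ t, ψ (t * x.1) * ψ (t * x.2.1) * ψ (-t * x.2.2.1 * x.2.2.2) := by
    calc _ = ∑ t, ψ (t * (x.1 + x.2.1 - x.2.2.1 * x.2.2.2)) := by
          simp only [AddChar.sum_mulShift _ hψ, sub_eq_zero]; split_ifs <;> simp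
      _ = _ := sum_congr rfl fun t _ => by
          rw [← AddChar.map_add_eq_mul, ← AddChar.map_add_eq_mul]; ring_nf
  rw [addEqMulCount, natCast_card_filter, mul_sum]
  simp only [hdetect]
  rw [sum_comm]
  refine sum_congr rfl fun t _ => ?_
  simp only [expSum, sum_product]
  rw [sum_mul_sum]
  simp only [sum_mul]
  simp only [mul_sum]

end CommRing

lemma sqrt_card_mul_card_le {α : Type*} [Fintype α] (X Y : Finset α) :
    √(#X * #Y : ℝ) ≤ Fintype.card α := by
  have hX : (#X : ℝ) ≤ Fintype.card α := mod_cast card_le_univ X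
  have hY : (#Y : ℝ) ≤ Fintype.card α := mod_cast card_le_univ Y
  rw [Real.sqrt_le_left (by positivity), sq]
  gcongr

lemma abs_card_mul_addEqMulCount_sub_le {F : Type*} [Field F] [Fintype F] [DecidableEq F]
    (A B C D : Finset F) :
    |(Fintype.card F : ℝ) * addEqMulCount A B C D - #A * #B * #C * #D| ≤
      √(Fintype.card F) * √(#C * #D) * (√(#A * #B) * (Fintype.card F - √(#A * #B))) := by
  obtain ⟨ψ, hψ⟩ : ∃ ψ : AddChar F ℂ, ψ.IsPrimitive :=
    ⟨_, AddChar.FiniteField.primitiveChar_to_Complex_isPrimitive F⟩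
  set V : F → ℂ := fun t ↦ ∑ c ∈ C, expSum ψ D (-t * c)
  have hcount : (((Fintype.card F : ℝ) * addEqMulCount A B C D - #A * #B * #C * #D : ℝ) : ℂ) =
      ∑ t ∈ univ.erase 0, expSum ψ A t * expSum ψ B t * V t := by
    push_cast
    rw [card_mul_addEqMulCount_eq_sum hψ, ← add_sum_erase _ _ (mem_univ 0)]
    simp only [V, neg_zero, zero_mul, expSum_zero, sum_const, nsmul_eq_mul]
    ring
  have hV (t : F) (ht : t ≠ 0) : ‖V t‖ ≤ √(Fintype.card F) * √(#C * #D) := by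
    rw [← Real.sqrt_mul (by positivity)]
    exact Real.le_sqrt_of_sq_le
      ((norm_sum_expSum_mul_sq_le hψ C D (neg_ne_zero.2 ht).isUnit).trans_eq (by ring))
  calc _ = ‖∑ t ∈ univ.erase 0, expSum ψ A t * expSum ψ B t * V t‖ := by
        rw [← hcount, Complex.norm_real, Real.norm_eq_abs]
    _ ≤ ∑ t ∈ univ.erase 0, ‖expSum ψ A t‖ * ‖expSum ψ B t‖ * ‖V t‖ :=
        (norm_sum_le _ _).trans_eq (by simp only [norm_mul])
    _ ≤ ∑ t ∈ univ.erase 0,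
          ‖expSum ψ A t‖ * ‖expSum ψ B t‖ * (√(Fintype.card F) * √(#C * #D)) :=
        sum_le_sum fun t ht ↦ by gcongr; exact hV t (ne_of_mem_erase ht)
    _ = √(Fintype.card F) * √(#C * #D) *
          ∑ t ∈ univ.erase 0, ‖expSum ψ A t‖ * ‖expSum ψ B t‖ := by
        rw [mul_sum]; simp only [mul_comm]
    _ ≤ _ := by gcongr; exact sum_erase_zero_norm_mul_norm_le hψ A B

/-- For a finite field `F` with `q` elements and subsets `A, B, C, D`,
the number `T` of quadruples `(a,b,c,d) ∈ A×B×C×D` with `a + b = cd` satisfies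
`|T - |A||B||C||D|/(q-1)| ≤ 2(q|A||B||C||D|)^{1/2}`. -/
theorem count_a_add_b_eq_cd (F : Type) [Field F] [Fintype F] [DecidableEq F]
    (A B C D : Finset F) :
    abs ((((A ×ˢ B ×ˢ C ×ˢ D).filter
        (fun x => x.1 + x.2.1 = x.2.2.1 * x.2.2.2)).card : ℝ) -
      (A.card * B.card * C.card * D.card : ℝ) / ((Fintype.card F : ℝ) - 1)) ≤
    2 * Real.sqrt ((Fintype.card F : ℝ) * (A.card * B.card * C.card * D.card)) := by
  have hq : (2 : ℝ) ≤ Fintype.card F := mod_cast Fintype.one_lt_card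
  have hN : (#A * #B * #C * #D : ℝ) = √(#C * #D) ^ 2 * √(#A * #B) ^ 2 := by
    rw [Real.sq_sqrt (by positivity), Real.sq_sqrt (by positivity)]
    ring
  have hsqrt : √(Fintype.card F * (#A * #B * #C * #D) : ℝ) =
      √(Fintype.card F) * √(#C * #D) * √(#A * #B) := by
    rw [show (#A * #B * #C * #D : ℝ) = #C * #D * (#A * #B) by ring,
      Real.sqrt_mul (by positivity), Real.sqrt_mul (by positivity), mul_assoc]
  have hbound := abs_card_mul_addEqMulCount_sub_le A B C D
  rw [hN] at hbound
  rw [hsqrt, hN]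
  exact abs_sub_div_sub_one_le hq (Real.sqrt_nonneg _) (sqrt_card_mul_card_le C D)
    (Real.sqrt_nonneg _) (sqrt_card_mul_card_le A B) hbound
end

section
/- Let F_q be a finite field with q elements. There exists an absolute constant C > 0 such that for any sets A, B, C, D ⊆ F_q with |A||B||C||D| ≥ C·q^3 and any λ ∈ F_q*, there exist a ∈ A, b ∈ B, c ∈ C, d ∈ D with ab + cd = λ. -/
/-!
Write `u = (a, c)` and `v = (b, d)`, so that `ab + cd = λ` reads `u ⬝ v = λ` in `F²`. For `v ≠ 0`
the `u` with `u ⬝ v = λ` form a line of `q` points, and as `λ ≠ 0` the lines of distinct `v` meet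
in at most one point. Hence, for `V ⊆ F² \ {0}`, the function `X u = #{v ∈ V | u ⬝ v = λ}` has
sum `q |V|` and square sum at most `q |V| + |V|²`. If `X` vanishes on `U`, Cauchy–Schwarz on the
complement of `U` gives `|U| (q + |V|) ≤ q³`. With `U = A × C'` and `V = (B × D) \ {0}` this
shows `|A| |B| |C'| |D| ≤ q³` when there is no solution.
-/

open Finset

namespace PlaneDot

variable {F : Type*} [Field F]

def dot (u v : F × F) : F := u.1 * v.1 + u.2 * v.2

lemma dot_swap (u v : F × F) : dot u.swap v.swap = dot u v := add_comm _ _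

lemma eq_or_eq_of_dot_eq {c : F} (hc : c ≠ 0) {u u' v v' : F × F} (h₁ : dot u v = c)
    (h₂ : dot u v' = c) (h₃ : dot u' v = c) (h₄ : dot u' v' = c) : u = u' ∨ v = v' := by
  unfold dot at h₁ h₂ h₃ h₄
  -- Proportional `v, v'` with `u ⬝ v = u ⬝ v' ≠ 0` are equal; otherwise `u` is determined by
  -- the invertible system `u ⬝ v = u ⬝ v' = c`.
  by_cases hδ : v.1 * v'.2 - v.2 * v'.1 = 0
  · right
    exact Prod.ext (mul_left_cancel₀ hc (by linear_combination v'.1 * h₁ - v.1 * h₂ + u.2 * hδ))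
      (mul_left_cancel₀ hc (by linear_combination v'.2 * h₁ - v.2 * h₂ - u.1 * hδ))
  · left
    exact Prod.ext
      (mul_left_cancel₀ hδ (by linear_combination v'.2 * (h₁ - h₃) - v.2 * (h₂ - h₄)))
      (mul_left_cancel₀ hδ (by linear_combination v.1 * (h₂ - h₄) - v'.1 * (h₁ - h₃)))

variable [Fintype F] [DecidableEq F]

lemma card_filter_dot_eq_of_snd_ne_zero (c : F) {v : F × F} (hv : v.2 ≠ 0) :
    #{u | dot u v = c} = Fintype.card F := by
  have hline : ({u | dot u v = c} : Finset (F × F)) =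
      univ.image fun t ↦ (t, (c - t * v.1) / v.2) := by
    ext ⟨x, y⟩
    simp only [mem_filter_univ, mem_image, mem_univ, true_and, Prod.mk.injEq]
    unfold dot
    constructor
    · intro h
      exact ⟨x, rfl, by field_simp; linear_combination -h⟩
    · rintro ⟨t, rfl, rfl⟩
      field_simp
      ring
  rw [hline, card_image_of_injective _ fun s t h ↦ congrArg Prod.fst h, card_univ]

lemma card_filter_dot_eq (c : F) {v : F × F} (hv : v ≠ 0) :
    #{u | dot u v = c} = Fintype.card F := by
  by_cases h₂ : v.2 = 0
  · have h₁ : v.swap.2 ≠ 0 := fun h₁ ↦ hv (Prod.ext h₁ h₂)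
    rw [← card_filter_dot_eq_of_snd_ne_zero c h₁]
    exact card_equiv (Equiv.prodComm F F) fun u ↦ by simp [← dot_swap u v]
  · exact card_filter_dot_eq_of_snd_ne_zero c h₂

lemma card_filter_dot_eq_and_dot_eq_le_one {c : F} (hc : c ≠ 0) {v v' : F × F} (hvv : v ≠ v') :
    #{u | dot u v = c ∧ dot u v' = c} ≤ 1 := by
  refine card_le_one.2 fun u hu u' hu' ↦ ?_
  rw [mem_filter_univ] at hu hu'
  exact (eq_or_eq_of_dot_eq hc hu.1 hu.2 hu'.1 hu'.2).resolve_right hvv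

lemma sum_card_filter_dot_eq (c : F) {V : Finset (F × F)} (hV : (0 : F × F) ∉ V) :
    ∑ u, #{v ∈ V | dot u v = c} = Fintype.card F * #V := by
  calc ∑ u, #{v ∈ V | dot u v = c} = ∑ v ∈ V, #{u | dot u v = c} :=
        sum_card_bipartiteAbove_eq_sum_card_bipartiteBelow _
    _ = Fintype.card F * #V := by
        rw [sum_const_nat fun v hv ↦ card_filter_dot_eq c (ne_of_mem_of_not_mem hv hV), mul_comm]

lemma sum_sq_card_filter_dot_le {c : F} (hc : c ≠ 0) {V : Finset (F × F)}
    (hV : (0 : F × F) ∉ V) :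
    ∑ u, #{v ∈ V | dot u v = c} ^ 2 ≤ Fintype.card F * #V + #V ^ 2 := by
  have hsq (u : F × F) : #{v ∈ V | dot u v = c} ^ 2 =
      #{p ∈ V ×ˢ V | dot u p.1 = c ∧ dot u p.2 = c} := by
    rw [sq, ← card_product, ← filter_product]
  calc ∑ u, #{v ∈ V | dot u v = c} ^ 2
      = ∑ p ∈ V ×ˢ V, #{u | dot u p.1 = c ∧ dot u p.2 = c} := by
        simp_rw [hsq]
        exact sum_card_bipartiteAbove_eq_sum_card_bipartiteBelow _
    _ ≤ ∑ p ∈ V ×ˢ V, ((if p.1 = p.2 then Fintype.card F else 0) + 1) := by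
        refine sum_le_sum fun p hp ↦ ?_
        split_ifs with h
        · simp only [← h, and_self]
          rw [card_filter_dot_eq c
            (ne_of_mem_of_not_mem (mem_product.1 hp).1 hV)]
          exact Nat.le_succ _
        · exact card_filter_dot_eq_and_dot_eq_le_one hc h
    _ = Fintype.card F * #V + #V ^ 2 := by
        simp [sum_add_distrib, sum_product, sum_ite_eq, sq, mul_comm]

theorem card_mul_add_card_le_of_forall_dot_ne {c : F} (hc : c ≠ 0) {U V : Finset (F × F)}
    (hV : (0 : F × F) ∉ V) (hUV : ∀ u ∈ U, ∀ v ∈ V, dot u v ≠ c) :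
    #U * (Fintype.card F + #V) ≤ Fintype.card F ^ 3 := by
  set q := Fintype.card F
  set X : F × F → ℕ := fun u ↦ #{v ∈ V | dot u v = c}
  have hXU : ∀ u ∈ U, X u = 0 := fun u hu ↦
    card_eq_zero.2 (filter_eq_empty_iff.2 fun v hv ↦ hUV u hu v hv)
  have hsum : ∑ u ∈ Uᶜ, X u = q * #V := by
    rw [← sum_card_filter_dot_eq c hV, ← sum_add_sum_compl U, sum_eq_zero hXU, zero_add]
  have hsq : ∑ u ∈ Uᶜ, X u ^ 2 ≤ q * #V + #V ^ 2 :=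
    (sum_le_sum_of_subset (subset_univ _)).trans (sum_sq_card_filter_dot_le hc hV)
  have hcs := sq_sum_le_card_mul_sum_sq (s := Uᶜ) (f := X)
  have hcard : #Uᶜ + #U = q ^ 2 := by rw [card_compl_add_card, Fintype.card_prod, sq]
  rw [hsum] at hcs
  rcases (#V).eq_zero_or_pos with hV0 | hVpos
  · rw [hV0]
    nlinarith
  · have hline : q ^ 2 * #V ≤ #Uᶜ * (q + #V) := by
      refine Nat.le_of_mul_le_mul_right ?_ hVpos
      nlinarith
    nlinarith

theorem card_mul_card_le_of_forall_dot_ne {c : F} (hc : c ≠ 0) {U V : Finset (F × F)}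
    (hUV : ∀ u ∈ U, ∀ v ∈ V, dot u v ≠ c) : #U * #V ≤ Fintype.card F ^ 3 := by
  have hcardV : #V ≤ Fintype.card F + #(V.erase 0) := by
    have := pred_card_le_card_erase (s := V) (a := 0)
    have : 0 < Fintype.card F := Fintype.card_pos
    omega
  calc #U * #V ≤ #U * (Fintype.card F + #(V.erase 0)) := Nat.mul_le_mul_left _ hcardV
    _ ≤ Fintype.card F ^ 3 := card_mul_add_card_le_of_forall_dot_ne hc (notMem_erase 0 V)
        fun u hu v hv ↦ hUV u hu v (mem_of_mem_erase hv)

end PlaneDot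

open PlaneDot

/-- There is an absolute constant `C > 0` such that for every finite field `F` with `q`
elements and all sets `A, B, C', D ⊆ F` with `|A||B||C'||D| ≥ C q^3`, the equation
`ab + cd = λ` is solvable for every nonzero `λ`. -/
theorem solvable_ab_cd : ∃ C : ℝ, 0 < C ∧
    ∀ (F : Type) [Field F] [Fintype F] [DecidableEq F] (A B C' D : Finset F),
      (A.card * B.card * C'.card * D.card : ℝ) ≥ C * (Fintype.card F : ℝ) ^ 3 →
      ∀ lam : F, lam ≠ 0 →
        ∃ a ∈ A, ∃ b ∈ B, ∃ c ∈ C', ∃ d ∈ D, a * b + c * d = lam := by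
  refine ⟨2, two_pos, fun F _ _ _ A B C' D hcard lam hlam ↦ ?_⟩
  by_contra! hno
  have hle : #(A ×ˢ C') * #(B ×ˢ D) ≤ Fintype.card F ^ 3 :=
    card_mul_card_le_of_forall_dot_ne hlam fun u hu v hv ↦
      hno u.1 (mem_product.1 hu).1 v.1 (mem_product.1 hv).1 u.2 (mem_product.1 hu).2 v.2
        (mem_product.1 hv).2
  rw [card_product, card_product] at hle
  have hleN : A.card * B.card * C'.card * D.card ≤ Fintype.card F ^ 3 := by linarith
  have hleR : (A.card * B.card * C'.card * D.card : ℝ) ≤ (Fintype.card F : ℝ) ^ 3 := by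
    exact_mod_cast hleN
  have hq : (0 : ℝ) < (Fintype.card F : ℝ) ^ 3 := by positivity
  linarith
end

section
/- Let F_q be a finite field with q elements. There exists an absolute constant C > 0 such that for any sets A, B, C, D ⊆ F_q with |A||B||C||D| ≥ C·q^3, there exist a ∈ A, b ∈ B, c ∈ C, d ∈ D with a + b = cd. -/
/-!
A pair `(c, a)` admits a solution of `a + b = c * d` exactly when the line `y = c x - a` meets
`D ×ˢ B`. Over all `q²` such lines the incidence counts sum to `q |D| |B|`, and since two points
with distinct abscissae lie on exactly one of these lines, their squares sum to at most
`q |D| |B| + (|D| |B|)²`. By Cauchy–Schwarz, counts with this first and second moment can vanish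
on the `|A| |C|` lines indexed by `C ×ˢ A` only if `|A| |B| |C| |D| ≤ q³`.
-/

open Finset

theorem sq_sum_add_card_mul_sum_sq_le {ι : Type*} [Fintype ι] (f : ι → ℕ) (Z : Finset ι)
    (hZ : ∀ i ∈ Z, f i = 0) :
    (∑ i, f i) ^ 2 + #Z * ∑ i, f i ^ 2 ≤ Fintype.card ι * ∑ i, f i ^ 2 := by
  classical
  set S := univ.filter (f · ≠ 0)
  have hSZ : #S + #Z ≤ Fintype.card ι := by
    rw [← card_union_of_disjoint]
    · exact card_le_univ _
    · exact disjoint_left.mpr fun i hiS hiZ => (mem_filter.mp hiS).2 (hZ i hiZ)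
  have hsum : ∑ i, f i = ∑ i ∈ S, f i := (sum_filter_ne_zero _).symm
  calc (∑ i, f i) ^ 2 + #Z * ∑ i, f i ^ 2
      ≤ #S * ∑ i ∈ S, f i ^ 2 + #Z * ∑ i, f i ^ 2 := by
        rw [hsum]; gcongr; exact sq_sum_le_card_mul_sum_sq
    _ ≤ #S * ∑ i, f i ^ 2 + #Z * ∑ i, f i ^ 2 := by
        gcongr; exact subset_univ _
    _ ≤ Fintype.card ι * ∑ i, f i ^ 2 := by
        rw [← add_mul]; gcongr

theorem card_filter_mul_sub_mem {R : Type*} [Ring R] [Fintype R] [DecidableEq R]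
    (B : Finset R) (d : R) :
    #{p : R × R | p.1 * d - p.2 ∈ B} = Fintype.card R * #B := by
  rw [← card_univ, ← card_product]
  refine card_nbij' (fun p => (p.1, p.1 * d - p.2)) (fun p => (p.1, p.1 * d - p.2))
    ?_ ?_ ?_ ?_ <;> intro p <;> simp

section LineIncidences

variable {F : Type*} [Field F] [Fintype F] [DecidableEq F]

/-- The number of points of `D ×ˢ B` on the line `y = c x - a`, where `p = (c, a)`. -/
def lineIncidences (B D : Finset F) (p : F × F) : ℕ := #{d ∈ D | p.1 * d - p.2 ∈ B}

theorem card_filter_mul_sub_mem_mul_sub_mem_le (B : Finset F) {d d' : F} (hd : d ≠ d') :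
    #{p : F × F | p.1 * d - p.2 ∈ B ∧ p.1 * d' - p.2 ∈ B} ≤ #B * #B := by
  rw [← card_product]
  refine card_le_card_of_injOn (fun p => (p.1 * d - p.2, p.1 * d' - p.2)) ?_ ?_
  · intro p hp
    simpa using hp
  · rintro ⟨c, a⟩ - ⟨c', a'⟩ - h
    simp only [Prod.mk.injEq] at h
    have hc : c = c' := by
      have : c * (d - d') = c' * (d - d') := by linear_combination h.1 - h.2
      exact mul_right_cancel₀ (sub_ne_zero.mpr hd) this
    subst hc
    simpa using h.1

theorem sum_lineIncidences (B D : Finset F) :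
    ∑ p, lineIncidences B D p = Fintype.card F * #D * #B := by
  simp only [lineIncidences, card_filter]
  rw [sum_comm]
  simp only [← card_filter, card_filter_mul_sub_mem, sum_const, smul_eq_mul]
  ring

theorem sum_lineIncidences_sq_le (B D : Finset F) :
    ∑ p, lineIncidences B D p ^ 2 ≤ Fintype.card F * #D * #B + (#D * #B) ^ 2 := by
  have hpairs : ∀ d d' : F,
      #{p : F × F | p.1 * d - p.2 ∈ B ∧ p.1 * d' - p.2 ∈ B}
        ≤ (if d = d' then Fintype.card F * #B else 0) + #B * #B := by
    intro d d'
    by_cases hd : d = d'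
    · subst hd
      simp only [and_self, card_filter_mul_sub_mem, if_true]
      omega
    · simpa [hd] using card_filter_mul_sub_mem_mul_sub_mem_le B hd
  calc ∑ p, lineIncidences B D p ^ 2
      = ∑ d ∈ D, ∑ d' ∈ D,
          #{p : F × F | p.1 * d - p.2 ∈ B ∧ p.1 * d' - p.2 ∈ B} := by
        simp only [lineIncidences, sq, card_filter, sum_mul_sum, ite_zero_mul_ite_zero,
          mul_one]
        rw [sum_comm]
        refine sum_congr rfl fun d _ => ?_
        rw [sum_comm]
    _ ≤ ∑ d ∈ D, ∑ d' ∈ D, ((if d = d' then Fintype.card F * #B else 0) + #B * #B) :=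
        sum_le_sum fun d _ => sum_le_sum fun d' _ => hpairs d d'
    _ = Fintype.card F * #D * #B + (#D * #B) ^ 2 := by
        simp only [sum_add_distrib, sum_ite_eq, sum_const, smul_eq_mul]
        rw [sum_ite_of_true fun _ => id, sum_const, smul_eq_mul]
        ring

theorem card_mul_card_mul_card_mul_card_le_of_forall_add_ne_mul (A B C D : Finset F)
    (h : ∀ a ∈ A, ∀ b ∈ B, ∀ c ∈ C, ∀ d ∈ D, a + b ≠ c * d) :
    #A * #B * #C * #D ≤ Fintype.card F ^ 3 := by
  have hzero : ∀ p ∈ C ×ˢ A, lineIncidences B D p = 0 := by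
    rintro ⟨c, a⟩ hp
    obtain ⟨hc, ha⟩ := mem_product.mp hp
    refine card_eq_zero.mpr (filter_eq_empty_iff.mpr fun d hd hb => ?_)
    exact h a ha _ hb c hc d hd (by ring)
  have hcs := sq_sum_add_card_mul_sum_sq_le (lineIncidences B D) (C ×ˢ A) hzero
  rw [sum_lineIncidences, card_product, Fintype.card_prod] at hcs
  have hM := sum_lineIncidences_sq_le B D
  set q := Fintype.card F
  set M := ∑ p, lineIncidences B D p ^ 2
  set X := #D * #B
  have hcs' : q ^ 2 * X ^ 2 + #C * #A * M ≤ q ^ 2 * M := by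
    convert hcs using 2 <;> ring
  have hXM : X ^ 2 ≤ M := le_of_mul_le_mul_left (le_of_add_le_left hcs') (by positivity)
  have hYM : #C * #A * X ^ 2 ≤ q ^ 3 * X := by
    have : q ^ 2 * M ≤ q ^ 3 * X + q ^ 2 * X ^ 2 := by
      calc q ^ 2 * M ≤ q ^ 2 * (q * #D * #B + X ^ 2) := by gcongr
        _ = q ^ 3 * X + q ^ 2 * X ^ 2 := by ring
    calc #C * #A * X ^ 2 ≤ #C * #A * M := by gcongr
      _ ≤ q ^ 3 * X := by omega
  rw [show #A * #B * #C * #D = #C * #A * X by ring]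
  rcases Nat.eq_zero_or_pos X with hX | hX
  · simp [hX]
  · exact le_of_mul_le_mul_right (by linarith) hX

end LineIncidences

/-- There is an absolute constant `C > 0` such that for every finite field `F` with `q`
elements and all sets `A, B, C', D ⊆ F` with `|A||B||C'||D| ≥ C q^3`, the equation
`a + b = cd` is solvable. -/
theorem solvable_a_add_b_eq_cd : ∃ C : ℝ, 0 < C ∧
    ∀ (F : Type) [Field F] [Fintype F] [DecidableEq F] (A B C' D : Finset F),
      (A.card * B.card * C'.card * D.card : ℝ) ≥ C * (Fintype.card F : ℝ) ^ 3 →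
        ∃ a ∈ A, ∃ b ∈ B, ∃ c ∈ C', ∃ d ∈ D, a + b = c * d := by
  refine ⟨2, two_pos, fun F _ _ _ A B C' D hP => ?_⟩
  by_contra! h
  have hle : ((#A * #B * #C' * #D : ℕ) : ℝ) ≤ (Fintype.card F ^ 3 : ℕ) :=
    Nat.cast_le.mpr (card_mul_card_mul_card_mul_card_le_of_forall_add_ne_mul A B C' D h)
  have hq : (0 : ℝ) < Fintype.card F := by exact_mod_cast Fintype.card_pos
  push_cast at hle
  nlinarith [pow_pos hq 3]
end

section
/- Let F_q be a finite field with q elements and F, G, H ⊆ F_q nonempty. Let E(F,G,H) be the set of λ ∈ F_q such that the equation f + gh = λ has no solution with f ∈ F, g ∈ G, h ∈ H. Then |E(F,G,H)| ≤ 16·q^3/(|F||G||H|). -/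
/-!
Let `N(λ)` count the triples `(f, g, h) ∈ F' × G × H = s` with `f + gh = λ`, and let
`T = ∑ N(λ)²` count the coincidences `f + gh = f' + g'h'`. Since `N` vanishes on `E`,
Cauchy–Schwarz gives `|s|² ≤ (q - |E|) T`. The Fourier transform of `N` at `ψ` factors as
`(∑_{f ∈ F'} ψ f) (∑_{g ∈ G, h ∈ H} ψ (gh))`, and for nontrivial `ψ` the second factor has
square norm at most `q |G| |H|` (Cauchy–Schwarz over `g`, then orthogonality of the characters
`g ↦ ψ (gh)` over `h`). Parseval, applied to `N` and to `1_{F'}`, then yields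
`q T ≤ |s|² + q² |s|`, and the two bounds together give `|E| |s| ≤ q³`.
-/

open Finset

namespace Finset

variable {ι β : Type*} [DecidableEq β]

def coincidences (s : Finset ι) (e : ι → β) : ℕ := #{x ∈ s ×ˢ s | e x.1 = e x.2}

lemma coincidences_eq_sum_sq (s : Finset ι) (e : ι → β) :
    coincidences s e = ∑ b ∈ s.image e, #{i ∈ s | e i = b} ^ 2 := by
  rw [coincidences, card_eq_sum_card_fiberwise (f := fun x => e x.1) (t := s.image e)]
  · refine sum_congr rfl fun b _ => ?_
    rw [sq, ← card_product]
    congr 1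
    ext x
    simp only [mem_filter, mem_product]
    constructor
    · rintro ⟨⟨⟨h1, h2⟩, h⟩, rfl⟩; exact ⟨⟨h1, rfl⟩, h2, h.symm⟩
    · rintro ⟨⟨h1, rfl⟩, h2, h⟩; exact ⟨⟨⟨h1, h2⟩, h.symm⟩, rfl⟩
  · intro x hx
    exact mem_image_of_mem e (mem_product.1 (mem_filter.1 hx).1).1

lemma coincidences_of_injective (s : Finset ι) {e : ι → β} (he : Function.Injective e) :
    coincidences s e = #s := by
  classical
  rw [coincidences]
  simp only [he.eq_iff]
  convert diag_card s using 2
  rw [diag_eq_filter]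

lemma sq_card_le_card_image_mul_coincidences (s : Finset ι) (e : ι → β) :
    #s ^ 2 ≤ #(s.image e) * coincidences s e := by
  rw [card_eq_sum_card_image e s, coincidences_eq_sum_sq]
  exact sq_sum_le_card_mul_sum_sq

lemma card_compl_image_mul_card_le [Fintype β] (s : Finset ι) (e : ι → β) {C : ℝ} (hC : 0 ≤ C)
    (hT : Fintype.card β * (coincidences s e : ℝ) ≤ #s ^ 2 + C * #s) :
    (#(s.image e)ᶜ : ℝ) * #s ≤ Fintype.card β * C := by
  have hq : (Fintype.card β : ℝ) = #(s.image e) + #(s.image e)ᶜ := by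
    exact_mod_cast (card_add_card_compl _).symm
  have hCS : (#s : ℝ) ^ 2 ≤ #(s.image e) * coincidences s e := by
    exact_mod_cast sq_card_le_card_image_mul_coincidences s e
  have key : Fintype.card β * (#s : ℝ) ^ 2 ≤ #(s.image e) * (#s ^ 2 + C * #s) :=
    calc Fintype.card β * (#s : ℝ) ^ 2
        ≤ Fintype.card β * (#(s.image e) * coincidences s e) := by gcongr
      _ = #(s.image e) * (Fintype.card β * coincidences s e) := by ring
      _ ≤ #(s.image e) * (#s ^ 2 + C * #s) := by gcongr
  rcases (#s).eq_zero_or_pos with hs | hs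
  · simpa [hs] using mul_nonneg (Nat.cast_nonneg _) hC
  · have hs : (0 : ℝ) < #s := by exact_mod_cast hs
    rw [hq] at key ⊢
    have : (#(s.image e)ᶜ * #s : ℝ) * #s ≤ (#(s.image e) * C) * #s := by linarith
    nlinarith [le_of_mul_le_mul_right this hs, mul_nonneg (Nat.cast_nonneg #(s.image e)ᶜ) hC]

end Finset

namespace AddChar

variable {ι α : Type*}

lemma norm_sum_apply_sq [AddCommGroup α] [Finite α] (ψ : AddChar α ℂ) (s : Finset ι)
    (e : ι → α) : (‖∑ i ∈ s, ψ (e i)‖ : ℂ) ^ 2 = ∑ x ∈ s ×ˢ s, ψ (e x.1 - e x.2) := by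
  simp only [← Complex.mul_conj', map_sum, sum_mul_sum, sum_product, sub_eq_add_neg,
    map_add_eq_mul, map_neg_eq_conj]

lemma sum_norm_sum_apply_sq [AddCommGroup α] [Fintype α] [DecidableEq α] (s : Finset ι)
    (e : ι → α) :
    ∑ ψ : AddChar α ℂ, ‖∑ i ∈ s, ψ (e i)‖ ^ 2 = Fintype.card α * coincidences s e := by
  apply Complex.ofReal_injective
  push_cast
  simp_rw [norm_sum_apply_sq]
  rw [sum_comm]
  simp_rw [sum_apply_eq_ite, sub_eq_zero, ← sum_filter, sum_const, nsmul_eq_mul]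
  rw [coincidences, mul_comm]

lemma sum_apply_add_mul {R M : Type*} [NonUnitalNonAssocSemiring R] [CommSemiring M]
    (ψ : AddChar R M) (F G H : Finset R) :
    ∑ x ∈ F ×ˢ G ×ˢ H, ψ (x.1 + x.2.1 * x.2.2) =
      (∑ f ∈ F, ψ f) * ∑ g ∈ G, ∑ h ∈ H, ψ (g * h) := by
  rw [sum_mul_sum]
  simp only [sum_product, map_add_eq_mul, mul_sum]

section Primitive

variable {R : Type*} [CommRing R] [Fintype R] [DecidableEq R] {ψ : AddChar R ℂ}

lemma sum_norm_sum_apply_mul_sq (hψ : ψ.IsPrimitive) (H : Finset R) :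
    ∑ g : R, ‖∑ h ∈ H, ψ (g * h)‖ ^ 2 = Fintype.card R * #H := by
  apply Complex.ofReal_injective
  push_cast
  simp_rw [norm_sum_apply_sq, ← mul_sub]
  rw [sum_comm]
  simp_rw [sum_mulShift _ hψ, sub_eq_zero, Nat.cast_ite, Nat.cast_zero, ← sum_filter, sum_const,
    nsmul_eq_mul, mul_comm (Fintype.card R : ℂ)]
  norm_cast
  congr 1
  exact coincidences_of_injective H Function.injective_id

lemma norm_sum_sum_apply_mul_sq_le (hψ : ψ.IsPrimitive) (G H : Finset R) :
    ‖∑ g ∈ G, ∑ h ∈ H, ψ (g * h)‖ ^ 2 ≤ Fintype.card R * #G * #H :=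
  calc ‖∑ g ∈ G, ∑ h ∈ H, ψ (g * h)‖ ^ 2
      ≤ (∑ g ∈ G, ‖∑ h ∈ H, ψ (g * h)‖) ^ 2 := by gcongr; exact norm_sum_le _ _
    _ ≤ #G * ∑ g ∈ G, ‖∑ h ∈ H, ψ (g * h)‖ ^ 2 := sq_sum_le_card_mul_sum_sq
    _ ≤ #G * ∑ g : R, ‖∑ h ∈ H, ψ (g * h)‖ ^ 2 := by gcongr; exact subset_univ G
    _ = Fintype.card R * #G * #H := by rw [sum_norm_sum_apply_mul_sq hψ]; ring

end Primitive

end AddChar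

lemma card_mul_coincidences_add_mul_le {F : Type*} [Field F] [Fintype F] [DecidableEq F]
    (F' G H : Finset F) :
    Fintype.card F * (coincidences (F' ×ˢ G ×ˢ H) fun x => x.1 + x.2.1 * x.2.2 : ℝ) ≤
      #(F' ×ˢ G ×ˢ H) ^ 2 + Fintype.card F ^ 2 * #(F' ×ˢ G ×ˢ H) := by
  set q : ℝ := (Fintype.card F : ℝ)
  rw [← AddChar.sum_norm_sum_apply_sq, ← add_sum_erase _ _ (mem_univ 0)]
  have hF' : ∑ ψ : AddChar F ℂ, ‖∑ f ∈ F', ψ f‖ ^ 2 = q * #F' := by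
    simpa [coincidences_of_injective F' Function.injective_id]
      using AddChar.sum_norm_sum_apply_sq F' id
  have hnontrivial :
      ∑ ψ ∈ univ.erase (0 : AddChar F ℂ), ‖∑ x ∈ F' ×ˢ G ×ˢ H, ψ (x.1 + x.2.1 * x.2.2)‖ ^ 2 ≤
        q * #G * #H * (q * #F') :=
    calc _ ≤ ∑ ψ ∈ univ.erase (0 : AddChar F ℂ), q * #G * #H * ‖∑ f ∈ F', ψ f‖ ^ 2 := by
          refine sum_le_sum fun ψ hψ => ?_
          rw [AddChar.sum_apply_add_mul, norm_mul, mul_pow, mul_comm]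
          gcongr
          exact AddChar.norm_sum_sum_apply_mul_sq_le
            (AddChar.IsPrimitive.of_ne_one (ne_of_mem_erase hψ)) G H
      _ ≤ q * #G * #H * ∑ ψ : AddChar F ℂ, ‖∑ f ∈ F', ψ f‖ ^ 2 := by
          rw [← mul_sum]
          gcongr
          exact erase_subset _ _
      _ = _ := by rw [hF']
  simp only [AddChar.zero_apply, sum_const, nsmul_eq_mul, mul_one, Complex.norm_natCast]
  push_cast [card_product] at hnontrivial ⊢
  linarith

/-- For a finite field `F` with `q` elements and nonempty `F', G, H ⊆ F`, the set of
`λ ∈ F` for which `f + gh = λ` has no solution has at most `16 q^3 / (|F'||G||H|)`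
elements. -/
theorem exceptional_set_bound (F : Type) [Field F] [Fintype F] [DecidableEq F]
    (F' G H : Finset F) (hF : F'.Nonempty) (hG : G.Nonempty) (hH : H.Nonempty) :
    ((Finset.univ.filter
        (fun lam : F => ∀ f ∈ F', ∀ g ∈ G, ∀ h ∈ H, f + g * h ≠ lam)).card : ℝ) ≤
      16 * (Fintype.card F : ℝ) ^ 3 / (F'.card * G.card * H.card : ℝ) := by
  set s := F' ×ˢ G ×ˢ H
  set e : F × F × F → F := fun x => x.1 + x.2.1 * x.2.2
  have hE : univ.filter (fun lam : F => ∀ f ∈ F', ∀ g ∈ G, ∀ h ∈ H, f + g * h ≠ lam) ⊆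
      (s.image e)ᶜ := by
    intro lam hlam
    rw [mem_compl]
    intro hmem
    obtain ⟨⟨f, g, h⟩, hfgh, rfl⟩ := mem_image.1 hmem
    simp only [s, mem_product] at hfgh
    exact (mem_filter.1 hlam).2 f hfgh.1 g hfgh.2.1 h hfgh.2.2 rfl
  have hcube := card_compl_image_mul_card_le s e (sq_nonneg (Fintype.card F : ℝ))
    (card_mul_coincidences_add_mul_le F' G H)
  have hs : (#s : ℝ) = #F' * #G * #H := by simp [s, mul_assoc]
  have hs_pos : (0 : ℝ) < #s := by exact_mod_cast (hF.product (hG.product hH)).card_pos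
  rw [le_div_iff₀ (hs ▸ hs_pos), ← hs]
  calc _ ≤ (#(s.image e)ᶜ : ℝ) * #s := by gcongr
    _ ≤ _ := by nlinarith
end

section
/- Let F_q be a finite field with q elements, χ a nontrivial multiplicative character of F_q (extended by χ(0) = 0), λ ∈ F_q*, and A, B ⊆ F_q. Then |Σ_{a∈A} Σ_{b∈B} χ(ab - λ)| ≤ (q·|A||B|)^{1/2}. -/
/-!
Squaring and applying Cauchy–Schwarz over `a ∈ A`, then enlarging `A` to all of `F`, reduces the
claim to `∑ₐ |∑_{b ∈ B} χ(ab - λ)|² ≤ q|B|`. Expanding the square gives the correlations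
`∑ₐ χ(ab - λ) χ̄(ab' - λ)`, which equal `q [b = b'] - χ(b) χ̄(b')`: for distinct nonzero `b, b'`
an affine change of variables turns them into the Jacobi sum `J(χ, χ⁻¹) = -χ(-1)`. Summing over `b, b' ∈ B`
gives `q|B| - |∑_{b ∈ B} χ(b)|² ≤ q|B|`.
-/

open Finset ComplexConjugate

variable {F R : Type*} [Field F] [Fintype F] [CommRing R]

lemma sum_comp_mul_add {M : Type*} [AddCommMonoid M] (f : F → M) {b : F} (hb : b ≠ 0) (c : F) :
    ∑ a, f (a * b + c) = ∑ x, f x :=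
  ((Equiv.mulRight₀ b hb).trans (Equiv.addRight c)).sum_comp f

namespace MulChar

variable {χ : MulChar F R}

variable (χ) in
noncomputable def shiftCorrelation (c b b' : F) : R :=
  ∑ a, χ (a * b - c) * χ⁻¹ (a * b' - c)

lemma shiftCorrelation_self {c : F} (hc : c ≠ 0) (b : F) :
    shiftCorrelation χ c b b = Fintype.card F - χ b * χ⁻¹ b := by
  classical
  simp_rw [shiftCorrelation, ← mul_apply, mul_inv_cancel]
  rcases eq_or_ne b 0 with rfl | hb
  · simp [one_apply (neg_ne_zero.mpr hc).isUnit]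
  · simp_rw [sub_eq_add_neg]
    rw [sum_comp_mul_add _ hb, sum_one_eq_card_units, one_apply hb.isUnit,
      Fintype.card_eq_card_units_add_one F]
    push_cast
    ring

variable [IsDomain R]

lemma sum_apply_mul_sub_eq_zero (hχ : χ ≠ 1) {b : F} (hb : b ≠ 0) (c : F) :
    ∑ a, χ (a * b - c) = 0 := by
  simp_rw [sub_eq_add_neg]
  rw [sum_comp_mul_add _ hb, sum_eq_zero_of_ne_one hχ]

lemma shiftCorrelation_of_ne (hχ : χ ≠ 1) {c b b' : F} (hc : c ≠ 0) (hb : b ≠ 0) (hb' : b' ≠ 0)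
    (hbb' : b ≠ b') : shiftCorrelation χ c b b' = -(χ b * χ⁻¹ b') := by
  have hsub : b - b' ≠ 0 := sub_ne_zero.mpr hbb'
  set α := c * (b - b') / b'
  set β := c * (b' - b) / b
  have hslope : α / b ≠ 0 := by simp [α, hc, hsub, hb, hb']
  -- substituting `a = (α t + c) / b` gives `ab - c = α t` and `ab' - c = β (1 - t)`
  have hterm : ∀ t, χ ((t * (α / b) + c / b) * b - c) * χ⁻¹ ((t * (α / b) + c / b) * b' - c)
      = χ α * χ⁻¹ β * (χ t * χ⁻¹ (1 - t)) := by
    intro t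
    rw [show (t * (α / b) + c / b) * b - c = α * t by field_simp; ring,
      show (t * (α / b) + c / b) * b' - c = β * (1 - t) by simp only [α, β]; field_simp; ring,
      map_mul, map_mul]
    ring
  rw [shiftCorrelation, ← sum_comp_mul_add _ hslope (c / b)]
  simp only [hterm]
  rw [← mul_sum, ← jacobiSum, jacobiSum_nontrivial_inv hχ]
  simp only [inv_apply', mul_neg, ← map_mul]
  congr 2
  simp only [α, β]
  field_simp
  ring

lemma shiftCorrelation_eq [DecidableEq F] (hχ : χ ≠ 1) {c : F} (hc : c ≠ 0) (b b' : F) :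
    shiftCorrelation χ c b b' = (if b = b' then (Fintype.card F : R) else 0) - χ b * χ⁻¹ b' := by
  rcases eq_or_ne b b' with rfl | hbb'
  · rw [if_pos rfl, shiftCorrelation_self hc]
  rw [if_neg hbb', zero_sub]
  rcases eq_or_ne b 0 with rfl | hb
  · simp [shiftCorrelation, ← mul_sum, sum_apply_mul_sub_eq_zero (inv_ne_one.mpr hχ) hbb'.symm]
  rcases eq_or_ne b' 0 with rfl | hb'
  · simp [shiftCorrelation, ← sum_mul, sum_apply_mul_sub_eq_zero hχ hb]
  exact shiftCorrelation_of_ne hχ hc hb hb' hbb'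

lemma sum_mul_sum_inv_apply_mul_sub (hχ : χ ≠ 1) {c : F} (hc : c ≠ 0) (B : Finset F) :
    ∑ a, (∑ b ∈ B, χ (a * b - c)) * ∑ b ∈ B, χ⁻¹ (a * b - c)
      = #B * Fintype.card F - (∑ b ∈ B, χ b) * ∑ b ∈ B, χ⁻¹ b := by
  classical
  calc _ = ∑ b ∈ B, ∑ b' ∈ B, shiftCorrelation χ c b b' := by
        simp_rw [sum_mul_sum, shiftCorrelation]
        rw [sum_comm]
        exact sum_congr rfl fun _ _ => sum_comm
    _ = _ := by
        simp_rw [shiftCorrelation_eq hχ hc, sum_sub_distrib, sum_ite_eq, ← mul_sum, ← sum_mul]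
        simp

lemma sum_norm_sum_apply_mul_sub_sq_le {χ : MulChar F ℂ} (hχ : χ ≠ 1) {c : F} (hc : c ≠ 0)
    (B : Finset F) :
    ∑ a, ‖∑ b ∈ B, χ (a * b - c)‖ ^ 2 ≤ Fintype.card F * #B := by
  have hinv (x : F) : χ⁻¹ x = conj (χ x) := by rw [starRingEnd_apply, star_apply']
  have key := sum_mul_sum_inv_apply_mul_sub hχ hc B
  simp_rw [hinv, ← map_sum, Complex.mul_conj'] at key
  have hreal : ∑ a, ‖∑ b ∈ B, χ (a * b - c)‖ ^ 2
      = #B * Fintype.card F - ‖∑ b ∈ B, χ b‖ ^ 2 := by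
    exact_mod_cast key
  rw [hreal, mul_comm]
  exact sub_le_self _ (sq_nonneg _)

end MulChar

theorem char_sum_ab_shift_general (F : Type) [Field F] [Fintype F]
    (χ : MulChar F ℂ) (hχ : χ ≠ 1) (lam : F) (hlam : lam ≠ 0) (A B : Finset F) :
    ‖∑ a ∈ A, ∑ b ∈ B, χ (a * b - lam)‖ ≤
      Real.sqrt ((Fintype.card F : ℝ) * (A.card * B.card)) := by
  set S := fun a => ∑ b ∈ B, χ (a * b - lam)
  rw [Real.le_sqrt (norm_nonneg _) (by positivity)]
  calc ‖∑ a ∈ A, S a‖ ^ 2 ≤ (∑ a ∈ A, ‖S a‖) ^ 2 := by gcongr; exact norm_sum_le _ _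
    _ ≤ #A * ∑ a ∈ A, ‖S a‖ ^ 2 := sq_sum_le_card_mul_sum_sq
    _ ≤ #A * ∑ a, ‖S a‖ ^ 2 := by gcongr; exact subset_univ A
    _ ≤ #A * (Fintype.card F * #B) := by
        gcongr; exact MulChar.sum_norm_sum_apply_mul_sub_sq_le hχ hlam B
    _ = _ := by ring

/-- For a finite field `F` with `q` elements, a nontrivial multiplicative character `χ`
(extended by `χ(0) = 0`), nonzero `λ`, and sets `A, B ⊆ F`,
`|∑_{a∈A} ∑_{b∈B} χ(ab - λ)| ≤ (q|A||B|)^{1/2}`. -/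
theorem char_sum_ab_shift (F : Type) [Field F] [Fintype F] [DecidableEq F]
    (χ : MulChar F ℂ) (hχ : χ ≠ 1) (lam : F) (hlam : lam ≠ 0) (A B : Finset F) :
    ‖∑ a ∈ A, ∑ b ∈ B, χ (a * b - lam)‖ ≤
      Real.sqrt ((Fintype.card F : ℝ) * (A.card * B.card)) :=
  char_sum_ab_shift_general F χ hχ lam hlam A B
end

section
/- Let F_p be a prime field and X, Y ⊆ F_p* nonempty with |Y| ≥ |X|. Let U = {x + y : x ∈ X, y ∈ Y} and V = {xy : x ∈ X, y ∈ Y}. Then there is an absolute constant C_0 > 0 such that |U|·|V| ≥ C_0·min{ p·|Y|, |X|^2·|Y|^2/p }. -/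
/-!
Every `(x₁, x₂, y) ∈ X × X × Y` gives a solution `(x₂ + y) + (-x₂) = (x₁ * y) * x₁⁻¹` of
`a + b = c * d` with `a ∈ X + Y`, `b ∈ -X`, `c ∈ X * Y`, `d ∈ X⁻¹`, so these are at least
`|X|² |Y|` in number. Sárközy's bound caps the count by `|X|² |U| |V| / q + |X| √(q |U| |V|)`:
expanding it in additive characters, the trivial character gives the main term, and
Cauchy–Schwarz with Parseval bounds the others. Whichever of the two terms dominates gives
`|U| |V| ≥ q |Y| / 4` or `|U| |V| ≥ |X|² |Y|² / (4 q)`.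
-/

open Finset Pointwise

namespace Garaev

section CommRing

variable {R : Type*} [CommRing R] {ψ : AddChar R ℂ}

noncomputable def expSum (ψ : AddChar R ℂ) (A : Finset R) (t : R) : ℂ := ∑ a ∈ A, ψ (t * a)

@[simp] lemma expSum_zero (A : Finset R) : expSum ψ A 0 = #A := by simp [expSum]

variable [Fintype R] [DecidableEq R]

lemma sum_norm_expSum_sq (hψ : ψ.IsPrimitive) (A : Finset R) :
    ∑ t, ‖expSum ψ A t‖ ^ 2 = Fintype.card R * #A := by
  have hsq (t : R) : ((‖expSum ψ A t‖ ^ 2 : ℝ) : ℂ) = ∑ a ∈ A, ∑ b ∈ A, ψ (t * (a - b)) := by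
    rw [Complex.ofReal_pow, ← Complex.mul_conj', expSum, map_sum, sum_mul_sum]
    refine sum_congr rfl fun a _ => sum_congr rfl fun b _ => ?_
    rw [← AddChar.map_neg_eq_conj, ← AddChar.map_add_eq_mul, mul_sub, sub_eq_add_neg]
  apply Complex.ofReal_injective
  push_cast [Complex.ofReal_sum, hsq]
  rw [sum_comm]
  simp_rw [sum_comm (s := univ), AddChar.sum_mulShift _ hψ, sub_eq_zero, Nat.cast_ite,
    Nat.cast_zero, sum_ite_eq]
  simp [mul_comm]

lemma sum_norm_expSum_mul_le (hψ : ψ.IsPrimitive) (A B : Finset R) :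
    ∑ t, ‖expSum ψ A t‖ * ‖expSum ψ B t‖ ≤ Fintype.card R * √(#A * #B) := by
  calc ∑ t, ‖expSum ψ A t‖ * ‖expSum ψ B t‖
      ≤ √(∑ t, ‖expSum ψ A t‖ ^ 2) * √(∑ t, ‖expSum ψ B t‖ ^ 2) :=
        Real.sum_mul_le_sqrt_mul_sqrt _ _ _
    _ = Fintype.card R * √(#A * #B) := by
        rw [sum_norm_expSum_sq hψ, sum_norm_expSum_sq hψ, ← Real.sqrt_mul (by positivity),
          show (Fintype.card R : ℝ) * #A * (Fintype.card R * #B) =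
            (Fintype.card R) ^ 2 * (#A * #B) by ring,
          Real.sqrt_mul (by positivity), Real.sqrt_sq (by positivity)]

def addEqMulSolutions (A B C D : Finset R) : Finset ((R × R) × R × R) :=
  {s ∈ (A ×ˢ B) ×ˢ C ×ˢ D | s.1.1 + s.1.2 = s.2.1 * s.2.2}

lemma card_mul_card_addEqMulSolutions (hψ : ψ.IsPrimitive) (A B C D : Finset R) :
    (Fintype.card R : ℂ) * #(addEqMulSolutions A B C D) =
      ∑ t, expSum ψ A t * expSum ψ B t * ∑ c ∈ C, expSum ψ D (-t * c) := by
  have hind (s : (R × R) × R × R) :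
      ∑ t, ψ (t * (s.1.1 + s.1.2 - s.2.1 * s.2.2)) =
        if s.1.1 + s.1.2 = s.2.1 * s.2.2 then (Fintype.card R : ℂ) else 0 := by
    simp_rw [AddChar.sum_mulShift _ hψ, sub_eq_zero]; push_cast; rfl
  have hexp (t : R) : expSum ψ A t * expSum ψ B t * ∑ c ∈ C, expSum ψ D (-t * c) =
      ∑ s ∈ (A ×ˢ B) ×ˢ C ×ˢ D, ψ (t * (s.1.1 + s.1.2 - s.2.1 * s.2.2)) := by
    simp_rw [sum_product]
    rw [expSum, expSum, sum_mul_sum, sum_mul]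
    refine sum_congr rfl fun a _ => ?_
    rw [sum_mul]
    refine sum_congr rfl fun b _ => ?_
    simp_rw [expSum, mul_sum, ← AddChar.map_add_eq_mul]
    exact sum_congr rfl fun c _ => sum_congr rfl fun d _ => congrArg ψ (by ring)
  simp_rw [hexp]
  rw [sum_comm]
  simp_rw [hind]
  rw [← sum_filter, sum_const, nsmul_eq_mul, mul_comm, addEqMulSolutions]

end CommRing

section Field

variable {F : Type*} [Field F] [DecidableEq F]

lemma card_sq_mul_card_le_card_addEqMulSolutions {X Y : Finset F} (hX : (0 : F) ∉ X) :
    #X ^ 2 * #Y ≤ #(addEqMulSolutions (X + Y) (-X) (X * Y) X⁻¹) := by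
  rw [sq, ← card_product, ← card_product]
  refine card_le_card_of_injOn (fun s => ((s.1.2 + s.2, -s.1.2), (s.1.1 * s.2, s.1.1⁻¹)))
    ?_ ?_
  · rintro ⟨⟨x₁, x₂⟩, y⟩ hs
    simp only [coe_product, Set.mem_prod, mem_coe] at hs
    obtain ⟨⟨hx₁, hx₂⟩, hy⟩ := hs
    have hx₁0 : x₁ ≠ 0 := ne_of_mem_of_not_mem hx₁ hX
    simp only [addEqMulSolutions, coe_filter, Set.mem_ofPred_eq, mem_product]
    refine ⟨⟨⟨add_mem_add hx₂ hy, neg_mem_neg hx₂⟩, mul_mem_mul hx₁ hy, inv_mem_inv hx₁⟩, ?_⟩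
    field_simp
    ring
  · rintro ⟨⟨x₁, x₂⟩, y⟩ _ ⟨⟨x₁', x₂'⟩, y'⟩ _ h
    simp only [Prod.mk.injEq, neg_inj, inv_inj] at h
    obtain ⟨⟨hsum, rfl⟩, -, rfl⟩ := h
    simp [add_left_cancel hsum]

variable [Fintype F]

lemma norm_sum_expSum_mul_le {ψ : AddChar F ℂ} (hψ : ψ.IsPrimitive) {t : F} (ht : t ≠ 0)
    (C D : Finset F) :
    ‖∑ c ∈ C, expSum ψ D (t * c)‖ ≤ √(#C * (Fintype.card F * #D)) := by
  have hCS : (∑ c ∈ C, ‖expSum ψ D (t * c)‖) ^ 2 ≤ #C * ∑ c ∈ C, ‖expSum ψ D (t * c)‖ ^ 2 :=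
    sq_sum_le_card_mul_sum_sq
  -- `c ↦ t * c` is injective, so these are among the terms of Parseval's identity
  have hsub : ∑ c ∈ C, ‖expSum ψ D (t * c)‖ ^ 2 ≤ Fintype.card F * #D := by
    rw [← sum_norm_expSum_sq hψ, ← sum_image (f := fun s => ‖expSum ψ D s‖ ^ 2) (g := (t * ·))
      fun _ _ _ _ h => mul_left_cancel₀ ht h]
    exact sum_le_univ_sum_of_nonneg fun _ => sq_nonneg _
  refine (norm_sum_le _ _).trans (Real.le_sqrt_of_sq_le ?_)
  exact hCS.trans (mul_le_mul_of_nonneg_left hsub (Nat.cast_nonneg _))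

theorem abs_card_addEqMulSolutions_sub_le (A B C D : Finset F) :
    |(#(addEqMulSolutions A B C D) : ℝ) - #A * #B * #C * #D / Fintype.card F| ≤
      √(Fintype.card F * #A * #B * #C * #D) := by
  obtain ⟨ψ, hψ1⟩ := AddChar.exists_apply_ne_zero.2 (one_ne_zero (α := F))
  have hψ : ψ.IsPrimitive := AddChar.IsPrimitive.of_ne_one fun h => hψ1 (by simp [h])
  set q : ℝ := (Fintype.card F : ℝ)
  have hq : 0 < q := Nat.cast_pos.2 Fintype.card_pos
  have hsplit := card_mul_card_addEqMulSolutions hψ A B C D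
  rw [Fintype.sum_eq_add_sum_compl 0] at hsplit
  simp only [neg_zero, zero_mul, expSum_zero, sum_const, nsmul_eq_mul] at hsplit
  have herr : ‖∑ t ∈ {0}ᶜ, expSum ψ A t * expSum ψ B t * ∑ c ∈ C, expSum ψ D (-t * c)‖ ≤
      q * √(#A * #B) * √(#C * (q * #D)) := by
    refine (norm_sum_le _ _).trans ?_
    calc ∑ t ∈ {0}ᶜ, ‖expSum ψ A t * expSum ψ B t * ∑ c ∈ C, expSum ψ D (-t * c)‖
        ≤ ∑ t ∈ {0}ᶜ, ‖expSum ψ A t‖ * ‖expSum ψ B t‖ * √(#C * (q * #D)) := by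
          refine sum_le_sum fun t ht => ?_
          rw [norm_mul, norm_mul]
          gcongr
          exact norm_sum_expSum_mul_le hψ (neg_ne_zero.2 (by simpa using ht)) C D
      _ ≤ ∑ t, ‖expSum ψ A t‖ * ‖expSum ψ B t‖ * √(#C * (q * #D)) :=
          sum_le_univ_sum_of_nonneg fun _ => by positivity
      _ ≤ q * √(#A * #B) * √(#C * (q * #D)) := by
          rw [← sum_mul]
          gcongr
          exact sum_norm_expSum_mul_le hψ A B
  have hmain : |q * #(addEqMulSolutions A B C D) - #A * #B * #C * #D| ≤
      q * √(q * #A * #B * #C * #D) := by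
    have hreal : (((q * #(addEqMulSolutions A B C D) - #A * #B * #C * #D : ℝ)) : ℂ) =
        ∑ t ∈ {0}ᶜ, expSum ψ A t * expSum ψ B t * ∑ c ∈ C, expSum ψ D (-t * c) := by
      push_cast [q]
      rw [hsplit]
      ring
    rw [← Real.norm_eq_abs, ← Complex.norm_real, hreal]
    refine herr.trans_eq ?_
    rw [mul_assoc, ← Real.sqrt_mul (by positivity)]
    ring_nf
  rw [show (#(addEqMulSolutions A B C D) : ℝ) - #A * #B * #C * #D / q =
      (q * #(addEqMulSolutions A B C D) - #A * #B * #C * #D) / q by field_simp,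
    abs_div, abs_of_pos hq, div_le_iff₀ hq]
  linarith

end Field

lemma min_le_four_mul_of_sq_mul_le {x y q w : ℝ} (hx : 0 < x) (hq : 0 < q) (hw : 0 ≤ w)
    (h : x ^ 2 * y ≤ x ^ 2 * w / q + √(q * x ^ 2 * w)) :
    min (q * y) (x ^ 2 * y ^ 2 / q) ≤ 4 * w := by
  by_contra! hlt
  obtain ⟨h₁, h₂⟩ := lt_min_iff.1 hlt
  have hy : 0 < y := by nlinarith
  have hfirst : x ^ 2 * w / q < x ^ 2 * y / 4 := by
    rw [div_lt_iff₀ hq]; nlinarith [sq_pos_of_pos hx]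
  have hsecond : √(q * x ^ 2 * w) < x ^ 2 * y / 2 := by
    rw [Real.sqrt_lt' (by positivity)]
    rw [lt_div_iff₀ hq] at h₂
    nlinarith [sq_pos_of_pos hx]
  nlinarith [sq_pos_of_pos hx]

theorem min_le_four_mul_card_add_mul_card_mul {F : Type*} [Field F] [Fintype F] [DecidableEq F]
    {X : Finset F} (Y : Finset F) (hX : X.Nonempty) (hX0 : (0 : F) ∉ X) :
    min ((Fintype.card F : ℝ) * #Y) ((#X : ℝ) ^ 2 * #Y ^ 2 / Fintype.card F) ≤
      4 * ((#(X + Y) : ℝ) * #(X * Y)) := by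
  have hsolutions := abs_card_addEqMulSolutions_sub_le (X + Y) (-X) (X * Y) X⁻¹
  rw [card_neg, card_inv] at hsolutions
  refine min_le_four_mul_of_sq_mul_le (Nat.cast_pos.2 hX.card_pos)
    (Nat.cast_pos.2 Fintype.card_pos) (by positivity) ?_
  calc (#X : ℝ) ^ 2 * #Y
      ≤ #(addEqMulSolutions (X + Y) (-X) (X * Y) X⁻¹) := by
        exact_mod_cast card_sq_mul_card_le_card_addEqMulSolutions hX0
    _ ≤ #(X + Y) * #X * #(X * Y) * #X / Fintype.card F +
          √(Fintype.card F * #(X + Y) * #X * #(X * Y) * #X) :=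
        sub_le_iff_le_add'.1 (abs_sub_le_iff.1 hsolutions).1
    _ = _ := by ring_nf

end Garaev

/-- Garaev's sum-product bound: there is an absolute constant `C₀ > 0` such that for any
prime `p` and nonempty `X, Y ⊆ F_p*` with `|Y| ≥ |X|`, the sumset `U = X + Y` and
product set `V = X·Y` satisfy `|U||V| ≥ C₀ min (p |Y|) (|X|²|Y|²/p)`. -/
theorem garaev_sum_product : ∃ C₀ : ℝ, 0 < C₀ ∧
    ∀ (p : ℕ) [Fact p.Prime] (X Y : Finset (ZMod p)),
      X.Nonempty → Y.Nonempty → (0 : ZMod p) ∉ X → (0 : ZMod p) ∉ Y →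
      X.card ≤ Y.card →
      (((X.biUnion fun x => Y.image fun y => x + y).card : ℝ) *
        ((X.biUnion fun x => Y.image fun y => x * y).card : ℝ)) ≥
        C₀ * min ((p : ℝ) * Y.card)
          ((X.card : ℝ) ^ 2 * (Y.card : ℝ) ^ 2 / (p : ℝ)) := by
  refine ⟨1 / 4, by norm_num, fun p _ X Y hX _ hX0 _ _ => ?_⟩
  have h := Garaev.min_le_four_mul_card_add_mul_card_mul Y hX hX0
  rw [ZMod.card] at h
  rw [biUnion_image_left, biUnion_image_left]
  change ((X + Y).card : ℝ) * (X * Y).card ≥ _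
  linarith
end
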